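/- Let p = 1 and let f be holomorphic on U^n with ‖f‖_1 < ∞. Then for every z ∈ U^n, |f(z)| ≤ (1 + 1/(n·ln 2)) · (Σ_{k=1}^n ln(2/(1−|z_k|²))) · ‖f‖_1. -/

import Mathlib

open Metric Set Filter

noncomputable section

def polydisc (n : ℕ) : Set (Fin n → ℂ) := {z | ∀ j, ‖z j‖ < 1}

def blochSum (n : ℕ) (p : ℝ) (f : (Fin n → ℂ) → ℂ) (z : Fin n → ℂ) : ℝ :=
  ∑ k : Fin n, ‖fderiv ℂ f z (Pi.single k 1)‖ * (1 - ‖z k‖ ^ 2) ^ p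

def blochNorm (n : ℕ) (p : ℝ) (f : (Fin n → ℂ) → ℂ) : ℝ :=
  ‖f 0‖ + sSup (blochSum n p f '' polydisc n)

def MemBloch (n : ℕ) (p : ℝ) (f : (Fin n → ℂ) → ℂ) : Prop :=
  DifferentiableOn ℂ f (polydisc n) ∧ BddAbove (blochSum n p f '' polydisc n)

def IsPolyFn (n : ℕ) (g : (Fin n → ℂ) → ℂ) : Prop :=
  ∃ P : MvPolynomial (Fin n) ℂ, ∀ z, g z = MvPolynomial.eval z P

def MemLittleBloch (n : ℕ) (p : ℝ) (f : (Fin n → ℂ) → ℂ) : Prop :=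
  MemBloch n p f ∧ ∀ ε : ℝ, 0 < ε →
    ∃ g, IsPolyFn n g ∧ blochNorm n p (fun z => f z - g z) < ε

def MemLittleStarBloch (n : ℕ) (p : ℝ) (f : (Fin n → ℂ) → ℂ) : Prop :=
  MemBloch n p f ∧ ∀ z : ℕ → Fin n → ℂ, (∀ j, z j ∈ polydisc n) →
    (∀ k, Tendsto (fun j => ‖z j k‖) atTop (nhds 1)) →
    Tendsto (fun j => blochSum n p f (z j)) atTop (nhds 0)

def HoloSelfMap (n : ℕ) (φ : (Fin n → ℂ) → Fin n → ℂ) : Prop :=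
  DifferentiableOn ℂ φ (polydisc n) ∧ ∀ z ∈ polydisc n, φ z ∈ polydisc n

def compSum (n : ℕ) (p q : ℝ) (φ : (Fin n → ℂ) → Fin n → ℂ) (z : Fin n → ℂ) : ℝ :=
  ∑ k : Fin n, ∑ l : Fin n, ‖fderiv ℂ φ z (Pi.single k 1) l‖ *
    ((1 - ‖z k‖ ^ 2) ^ q / (1 - ‖φ z l‖ ^ 2) ^ p)

/-!
Integrate along the radius `s ↦ f (s • z)`, `s ∈ [0, 1]`. With `S` the supremum in the Bloch norm,
`‖∂ₖ f (s z)‖ ≤ S / (1 - s² ‖zₖ‖²) ≤ S / (1 - s ‖zₖ‖)`, so comparing with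
`s ↦ S ∑ₖ -log (1 - s ‖zₖ‖)` gives
`‖f z - f 0‖ ≤ S ∑ₖ -log (1 - ‖zₖ‖) ≤ S ∑ₖ log (2 / (1 - ‖zₖ‖²))`.
Each of the `n` summands is at least `log 2`, so the factor `1 + 1 / (n log 2)` absorbs `‖f 0‖`.
-/

lemma isOpen_polydisc (n : ℕ) : IsOpen (polydisc n) := by
  simp only [polydisc, ofPred_forall]
  exact isOpen_iInter_of_finite fun j => isOpen_lt (continuous_apply j).norm continuous_const

lemma zero_mem_polydisc (n : ℕ) : (0 : Fin n → ℂ) ∈ polydisc n := fun j => by simp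

lemma smul_mem_polydisc {n : ℕ} {z : Fin n → ℂ} (hz : z ∈ polydisc n) {t : ℝ} (ht : |t| ≤ 1) :
    t • z ∈ polydisc n := fun j => by
  rw [Pi.smul_apply, norm_smul, Real.norm_eq_abs]
  exact (mul_le_of_le_one_left (norm_nonneg _) ht).trans_lt (hz j)

lemma norm_fderiv_single_mul_rpow_nonneg {n : ℕ} (p : ℝ) (f : (Fin n → ℂ) → ℂ) {w : Fin n → ℂ}
    (hw : w ∈ polydisc n) (k : Fin n) :
    0 ≤ ‖fderiv ℂ f w (Pi.single k 1)‖ * (1 - ‖w k‖ ^ 2) ^ p := by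
  have : ‖w k‖ ^ 2 ≤ 1 := pow_le_one₀ (norm_nonneg _) (hw k).le
  exact mul_nonneg (norm_nonneg _) (Real.rpow_nonneg (by linarith) _)

lemma MemBloch.sSup_nonneg {n : ℕ} {p : ℝ} {f : (Fin n → ℂ) → ℂ} (hf : MemBloch n p f) :
    0 ≤ sSup (blochSum n p f '' polydisc n) :=
  (Finset.sum_nonneg fun k _ =>
      norm_fderiv_single_mul_rpow_nonneg p f (zero_mem_polydisc n) k).trans
    (le_csSup hf.2 ⟨0, zero_mem_polydisc n, rfl⟩)

lemma MemBloch.norm_fderiv_single_mul_le {n : ℕ} {p : ℝ} {f : (Fin n → ℂ) → ℂ}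
    (hf : MemBloch n p f) {w : Fin n → ℂ} (hw : w ∈ polydisc n) (k : Fin n) :
    ‖fderiv ℂ f w (Pi.single k 1)‖ * (1 - ‖w k‖ ^ 2) ^ p ≤
      sSup (blochSum n p f '' polydisc n) :=
  (Finset.single_le_sum (fun j _ => norm_fderiv_single_mul_rpow_nonneg p f hw j)
    (Finset.mem_univ k)).trans (le_csSup hf.2 ⟨w, hw, rfl⟩)

lemma ContinuousLinearMap.norm_apply_le_sum_norm_single {𝕜 F ι : Type*} [RCLike 𝕜]
    [NormedAddCommGroup F] [NormedSpace 𝕜 F] [Fintype ι] [DecidableEq ι]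
    (T : (ι → 𝕜) →L[𝕜] F) (z : ι → 𝕜) :
    ‖T z‖ ≤ ∑ k, ‖z k‖ * ‖T (Pi.single k 1)‖ := by
  conv_lhs => rw [pi_eq_sum_univ' z, map_sum]
  refine (norm_sum_le _ _).trans (Finset.sum_le_sum fun k _ => ?_)
  rw [map_smul, norm_smul]

lemma DifferentiableAt.hasDerivAt_comp_real_smul {E F : Type*}
    [NormedAddCommGroup E] [NormedSpace ℂ E] [NormedAddCommGroup F] [NormedSpace ℂ F]
    {f : E → F} {z : E} {t : ℝ}
    (hf : DifferentiableAt ℂ f (t • z)) :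
    HasDerivAt (fun s : ℝ => f (s • z)) (fderiv ℂ f (t • z) z) t := by
  have hline : HasDerivAt (fun s : ℝ => s • z) z t := by
    simpa using (hasDerivAt_id t).smul_const z
  exact (hf.hasFDerivAt.restrictScalars ℝ).comp_hasDerivAt t hline

lemma hasDerivAt_neg_log_one_sub_mul {r t : ℝ} (h : t * r ≠ 1) :
    HasDerivAt (fun s => -Real.log (1 - s * r)) (r / (1 - t * r)) t := by
  have hlin : HasDerivAt (fun s => 1 - s * r) (-r) t := by
    simpa using ((hasDerivAt_id t).mul_const r).const_sub 1
  have := (hlin.log (sub_ne_zero.mpr h.symm)).neg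
  rwa [neg_div, neg_neg] at this

lemma mul_le_div_one_sub_mul {a r t M : ℝ} (ha : 0 ≤ a) (hr : 0 ≤ r) (ht : 0 ≤ t)
    (htr : t * r < 1) (hM : a * (1 - (t * r) ^ 2) ≤ M) :
    r * a ≤ M * (r / (1 - t * r)) := by
  rw [mul_div_assoc', le_div_iff₀ (by linarith)]
  have hsq : (t * r) ^ 2 ≤ t * r := by nlinarith [mul_nonneg ht hr]
  have hM' : a * (1 - t * r) ≤ M := by nlinarith
  nlinarith [mul_le_mul_of_nonneg_left hM' hr]

section RadialEstimate

variable {n : ℕ} {f : (Fin n → ℂ) → ℂ} {M : ℝ}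

lemma norm_fderiv_smul_apply_le (hM : ∀ w ∈ polydisc n, ∀ k,
      ‖fderiv ℂ f w (Pi.single k 1)‖ * (1 - ‖w k‖ ^ 2) ≤ M)
    {z : Fin n → ℂ} (hz : z ∈ polydisc n) {t : ℝ} (ht : t ∈ Icc (0 : ℝ) 1) :
    ‖fderiv ℂ f (t • z) z‖ ≤ ∑ k, M * (‖z k‖ / (1 - t * ‖z k‖)) := by
  refine ((fderiv ℂ f (t • z)).norm_apply_le_sum_norm_single z).trans
    (Finset.sum_le_sum fun k _ => ?_)
  have hnorm : ‖(t • z) k‖ = t * ‖z k‖ := by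
    rw [Pi.smul_apply, norm_smul, Real.norm_of_nonneg ht.1]
  have hk := hM (t • z) (smul_mem_polydisc hz ((abs_of_nonneg ht.1).trans_le ht.2)) k
  rw [hnorm] at hk
  exact mul_le_div_one_sub_mul (norm_nonneg _) (norm_nonneg _) ht.1
    ((mul_le_of_le_one_left (norm_nonneg _) ht.2).trans_lt (hz k)) hk

lemma norm_sub_apply_zero_le (hfd : DifferentiableOn ℂ f (polydisc n))
    (hM : ∀ w ∈ polydisc n, ∀ k, ‖fderiv ℂ f w (Pi.single k 1)‖ * (1 - ‖w k‖ ^ 2) ≤ M)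
    {z : Fin n → ℂ} (hz : z ∈ polydisc n) :
    ‖f z - f 0‖ ≤ M * ∑ k, -Real.log (1 - ‖z k‖) := by
  have hseg : ∀ t ∈ Icc (0 : ℝ) 1, ∀ k, t * ‖z k‖ < 1 := fun t ht k =>
    (mul_le_of_le_one_left (norm_nonneg _) ht.2).trans_lt (hz k)
  have hderiv : ∀ t ∈ Icc (0 : ℝ) 1,
      HasDerivAt (fun s : ℝ => f (s • z) - f 0) (fderiv ℂ f (t • z) z) t := fun t ht =>
    ((hfd.differentiableAt ((isOpen_polydisc n).mem_nhds (smul_mem_polydisc hz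
      ((abs_of_nonneg ht.1).trans_le ht.2)))).hasDerivAt_comp_real_smul).sub_const _
  have hbound : ∀ t ∈ Icc (0 : ℝ) 1, HasDerivAt (fun s => ∑ k, M * -Real.log (1 - s * ‖z k‖))
      (∑ k, M * (‖z k‖ / (1 - t * ‖z k‖))) t := fun t ht =>
    HasDerivAt.fun_sum fun k _ =>
      (hasDerivAt_neg_log_one_sub_mul (hseg t ht k).ne).const_mul M
  have key := image_norm_le_of_norm_deriv_right_le_deriv_boundary'
    (fun t ht => (hderiv t ht).continuousAt.continuousWithinAt)
    (fun t ht => (hderiv t (Ico_subset_Icc_self ht)).hasDerivWithinAt)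
    (by simp) (fun t ht => (hbound t ht).continuousAt.continuousWithinAt)
    (fun t ht => (hbound t (Ico_subset_Icc_self ht)).hasDerivWithinAt)
    (fun t ht => norm_fderiv_smul_apply_le hM hz (Ico_subset_Icc_self ht))
    (right_mem_Icc.mpr zero_le_one)
  simpa [Finset.mul_sum] using key

end RadialEstimate

lemma neg_log_one_sub_le_log_two_div {r : ℝ} (hr0 : 0 ≤ r) (hr1 : r < 1) :
    -Real.log (1 - r) ≤ Real.log (2 / (1 - r ^ 2)) := by
  rw [← Real.log_inv]
  apply Real.log_le_log (inv_pos.mpr (by linarith))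
  rw [inv_eq_one_div, div_le_div_iff₀ (by linarith) (by nlinarith)]
  nlinarith

lemma log_two_le_log_two_div {r : ℝ} (hr0 : 0 ≤ r) (hr1 : r < 1) :
    Real.log 2 ≤ Real.log (2 / (1 - r ^ 2)) := by
  apply Real.log_le_log two_pos
  rw [le_div_iff₀ (by nlinarith)]
  nlinarith

lemma add_mul_le_one_add_inv_mul_mul {a S c L : ℝ} (ha : 0 ≤ a) (hS : 0 ≤ S) (hc : 0 < c)
    (hcL : c ≤ L) : a + S * L ≤ (1 + 1 / c) * L * (a + S) := by
  have hLc : 1 ≤ L / c := (one_le_div hc).mpr hcL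
  have : (1 + 1 / c) * L * (a + S) = L * a + S * L + L / c * a + L / c * S := by
    field_simp; ring
  rw [this]
  nlinarith [mul_nonneg (hc.le.trans hcL) ha, mul_nonneg (zero_le_one.trans hLc) hS]

/-- Lemma 1 (2): growth estimate for functions in the 1-Bloch space. -/
theorem bloch_growth_eq_one (n : ℕ) (hn : 0 < n)
    (f : (Fin n → ℂ) → ℂ) (hf : MemBloch n 1 f) :
    ∀ z ∈ polydisc n,
      ‖f z‖ ≤ (1 + 1 / ((n : ℝ) * Real.log 2)) *
        (∑ k : Fin n, Real.log (2 / (1 - ‖z k‖ ^ 2))) * blochNorm n 1 f := by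
  intro z hz
  set S := sSup (blochSum n 1 f '' polydisc n)
  set L := ∑ k : Fin n, Real.log (2 / (1 - ‖z k‖ ^ 2))
  have hS : 0 ≤ S := hf.sSup_nonneg
  have hdiff : ‖f z - f 0‖ ≤ S * L :=
    (norm_sub_apply_zero_le hf.1 (fun w hw k => by
      simpa using hf.norm_fderiv_single_mul_le hw k) hz).trans <|
    mul_le_mul_of_nonneg_left (Finset.sum_le_sum fun k _ =>
      neg_log_one_sub_le_log_two_div (norm_nonneg _) (hz k)) hS
  have hL : (n : ℝ) * Real.log 2 ≤ L := by
    simpa using Finset.sum_le_sum fun k (_ : k ∈ Finset.univ) =>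
      log_two_le_log_two_div (norm_nonneg _) (hz k)
  calc ‖f z‖ ≤ ‖f 0‖ + ‖f z - f 0‖ := norm_le_norm_add_norm_sub' _ _
    _ ≤ ‖f 0‖ + S * L := by gcongr
    _ ≤ _ := add_mul_le_one_add_inv_mul_mul (norm_nonneg _) hS
      (by positivity) hL
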